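/- arXiv:math/0509518 — 2 statements merged into one kernel-verified Lean document; each statement's English description precedes it below -/
import Mathlib

section
/- Let ψ be a branching mechanism, strictly increasing on [γ,∞) with lim_{c→∞} ψ(c) = ∞, and let 0 ≤ μ ≤ λ with λ > 0. Set q = ψ^{-1}(λ), define φ_{0,λ}(s) = s + ψ( q − s(q − γ) ) / ( (q − γ) ψ'(q) ), g = 1 − (ψ^{-1}(μ) − γ)/(q − γ), and κ(s) = 1 − ( ψ^{-1}( ψ( (q − ψ^{-1}(μ))(1−s) + ψ^{-1}(μ) ) − μ ) − γ )/(q − γ) for s ∈ [0,1]. Then κ(s) ∈ [0,1] and φ_{0,λ}(κ(s)) − κ(s) = φ_{0,λ}(s g) − s g − ( φ_{0,λ}(g) − g ) for every s ∈ [0,1]. -/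
open MeasureTheory

/-- `ψ` is a branching mechanism with parameters `(α, β, ν)`:
`ψ(c) = αc + βc² + ∫ (e^{-cx} - 1 + cx 1_{x<1}) ν(dx)` for all `c ≥ 0`, where `β ≥ 0` and
`ν` is a measure on `(0,∞)` with `∫ min(1,x²) ν(dx) < ∞`. -/
def IsBMWith (ψ : ℝ → ℝ) (α β : ℝ) (ν : Measure ℝ) : Prop :=
  0 ≤ β ∧ ν (Set.Iic 0) = 0 ∧ (∫⁻ x, ENNReal.ofReal (min 1 (x ^ 2)) ∂ν) < ⊤ ∧
    ∀ c : ℝ, 0 ≤ c →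
      ψ c = α * c + β * c ^ 2
        + ∫ x, (Real.exp (-(c * x)) - 1 + (if x < 1 then c * x else 0)) ∂ν

/-- `ψ` is a branching mechanism: it is of Lévy–Khintchine form for some parameters. -/
def IsBranchingMechanism (ψ : ℝ → ℝ) : Prop :=
  ∃ (α β : ℝ) (ν : Measure ℝ), IsBMWith ψ α β ν

/-- The generating function `φ_{0,λ}(s) = s + ψ(q - s(q-γ))/((q-γ)ψ'(q))`, with `q = ψ^{-1}(λ)`. -/
noncomputable def phi0L (ψ ψinv : ℝ → ℝ) (γ lam : ℝ) (s : ℝ) : ℝ :=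
  s + ψ (ψinv lam - s * (ψinv lam - γ)) /
      ((ψinv lam - γ) * derivWithin ψ (Set.Ioi 0) (ψinv lam))

/-- `g = 1 - (ψ^{-1}(μ) - γ)/(ψ^{-1}(λ) - γ)`. -/
noncomputable def gML (ψinv : ℝ → ℝ) (γ μ lam : ℝ) : ℝ :=
  1 - (ψinv μ - γ) / (ψinv lam - γ)

/-- `κ(s) = 1 - (ψ^{-1}(ψ((ψ^{-1}(λ)-ψ^{-1}(μ))(1-s) + ψ^{-1}(μ)) - μ) - γ)/(ψ^{-1}(λ) - γ)`. -/
noncomputable def kappaML (ψ ψinv : ℝ → ℝ) (γ μ lam : ℝ) (s : ℝ) : ℝ :=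
  1 - (ψinv (ψ ((ψinv lam - ψinv μ) * (1 - s) + ψinv μ) - μ) - γ) / (ψinv lam - γ)

/-! Everything is an affine change of variables: `s ↦ q - s(q - γ)` maps `[0,1]` onto `[γ, q]`
with inverse `x ↦ 1 - (x - γ)/(q - γ)`, and under it `κ(s)`, `g` and `sg` correspond to
`ψ⁻¹(ψ(c) - μ)`, `ψ⁻¹(μ)` and `c = (q - ψ⁻¹(μ))(1 - s) + ψ⁻¹(μ)`. Since `φ_{0,λ}(s) - s` is
`ψ` at the corresponding point up to a constant factor, the identity reduces to
`ψ(ψ⁻¹(ψ(c) - μ)) = ψ(c) - ψ(ψ⁻¹(μ))`. Monotonicity of `ψ` on `[γ,∞)` keeps all points in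
`[γ, q]`, which gives `κ(s) ∈ [0,1]`. -/

theorem one_sub_div_mem_Icc {a b x : ℝ} (hab : a < b) (hax : a ≤ x) (hxb : x ≤ b) :
    1 - (x - a) / (b - a) ∈ Set.Icc (0 : ℝ) 1 := by
  have hba : 0 < b - a := sub_pos.2 hab
  constructor
  · rw [sub_nonneg, div_le_one hba]; linarith
  · have : 0 ≤ (x - a) / (b - a) := div_nonneg (sub_nonneg.2 hax) hba.le
    linarith

theorem phi0L_one_sub_div_sub {ψ ψinv : ℝ → ℝ} {γ lam : ℝ} (x : ℝ) (h : ψinv lam ≠ γ) :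
    phi0L ψ ψinv γ lam (1 - (x - γ) / (ψinv lam - γ)) - (1 - (x - γ) / (ψinv lam - γ))
      = ψ x / ((ψinv lam - γ) * derivWithin ψ (Set.Ioi 0) (ψinv lam)) := by
  have hx : ψinv lam - (1 - (x - γ) / (ψinv lam - γ)) * (ψinv lam - γ) = x := by
    field_simp [sub_ne_zero.2 h]; ring
  rw [phi0L, add_sub_cancel_left, hx]

section Inverse

variable {ψ ψinv : ℝ → ℝ} {γ : ℝ} (hmono : StrictMonoOn ψ (Set.Ici γ))
  (hinv : ∀ y : ℝ, 0 ≤ y → γ ≤ ψinv y ∧ ψ (ψinv y) = y)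
include hmono hinv

theorem psiInv_mono {x y : ℝ} (hx : 0 ≤ x) (hxy : x ≤ y) : ψinv x ≤ ψinv y := by
  obtain ⟨hγx, hψx⟩ := hinv x hx
  obtain ⟨hγy, hψy⟩ := hinv y (hx.trans hxy)
  exact (hmono.le_iff_le hγx hγy).1 (by rwa [hψx, hψy])

theorem le_apply_of_psiInv_le {y c : ℝ} (hy : 0 ≤ y) (hc : γ ≤ c) (h : ψinv y ≤ c) :
    y ≤ ψ c := by
  obtain ⟨hγy, hψy⟩ := hinv y hy
  simpa only [hψy] using (hmono.le_iff_le hγy hc).2 h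

theorem apply_le_of_le_psiInv {y c : ℝ} (hy : 0 ≤ y) (hc : γ ≤ c) (h : c ≤ ψinv y) :
    ψ c ≤ y := by
  obtain ⟨hγy, hψy⟩ := hinv y hy
  simpa only [hψy] using (hmono.le_iff_le hc hγy).2 h

end Inverse

theorem kappa_identity_general (ψ : ℝ → ℝ) (γ : ℝ)
    (hγroot : ψ γ = 0)
    (hmono : StrictMonoOn ψ (Set.Ici γ))
    (ψinv : ℝ → ℝ) (hinv₁ : ∀ y : ℝ, 0 ≤ y → γ ≤ ψinv y ∧ ψ (ψinv y) = y)
    (μ lam : ℝ) (hμ : 0 ≤ μ) (hml : μ ≤ lam) (hlam : 0 < lam) :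
    ∀ s ∈ Set.Icc (0 : ℝ) 1,
      kappaML ψ ψinv γ μ lam s ∈ Set.Icc (0 : ℝ) 1 ∧
      phi0L ψ ψinv γ lam (kappaML ψ ψinv γ μ lam s) - kappaML ψ ψinv γ μ lam s
        = phi0L ψ ψinv γ lam (s * gML ψinv γ μ lam) - s * gML ψinv γ μ lam
          - (phi0L ψ ψinv γ lam (gML ψinv γ μ lam) - gML ψinv γ μ lam) := by
  rintro s ⟨hs0, hs1⟩
  obtain ⟨hγq, hψq⟩ := hinv₁ lam hlam.le
  obtain ⟨hγm, hψm⟩ := hinv₁ μ hμ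
  set q := ψinv lam
  set m := ψinv μ
  have hγq' : γ < q := hγq.lt_of_ne fun h => by rw [← h, hγroot] at hψq; exact hlam.ne hψq
  have hmq : m ≤ q := psiInv_mono hmono hinv₁ hμ hml
  set c := (q - m) * (1 - s) + m
  have hmc : m ≤ c := by nlinarith
  have hcq : c ≤ q := by nlinarith
  have hμc : μ ≤ ψ c := le_apply_of_psiInv_le hmono hinv₁ hμ (hγm.trans hmc) hmc
  have hcl : ψ c ≤ lam := apply_le_of_le_psiInv hmono hinv₁ hlam.le (hγm.trans hmc) hcq
  obtain ⟨hγX, hψX⟩ := hinv₁ (ψ c - μ) (sub_nonneg.2 hμc)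
  have hXq : ψinv (ψ c - μ) ≤ q := psiInv_mono hmono hinv₁ (sub_nonneg.2 hμc) (by linarith)
  have hsg : s * gML ψinv γ μ lam = 1 - (c - γ) / (q - γ) := by
    change s * (1 - (m - γ) / (q - γ)) = _
    field_simp [(sub_pos.2 hγq').ne']; ring
  have hκ : kappaML ψ ψinv γ μ lam s = 1 - (ψinv (ψ c - μ) - γ) / (q - γ) := rfl
  refine ⟨hκ ▸ one_sub_div_mem_Icc hγq' hγX hXq, ?_⟩
  rw [hκ, hsg, gML, phi0L_one_sub_div_sub _ hγq'.ne', phi0L_one_sub_div_sub _ hγq'.ne',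
    phi0L_one_sub_div_sub _ hγq'.ne', hψX, hψm, sub_div]

/-- For a branching mechanism `ψ` strictly increasing on `[γ,∞)` (`γ` its largest root) with
`ψ(c) → ∞`, and `0 ≤ μ ≤ λ` with `λ > 0`: for every `s ∈ [0,1]`, `κ(s) ∈ [0,1]` and
`φ_{0,λ}(κ(s)) - κ(s) = φ_{0,λ}(sg) - sg - (φ_{0,λ}(g) - g)`. -/
theorem kappa_identity (ψ : ℝ → ℝ) (hψ : IsBranchingMechanism ψ) (γ : ℝ)
    (hγ0 : 0 ≤ γ) (hγroot : ψ γ = 0) (hγlargest : ∀ c : ℝ, 0 ≤ c → ψ c ≤ 0 → c ≤ γ)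
    (hmono : StrictMonoOn ψ (Set.Ici γ))
    (htop : Filter.Tendsto ψ Filter.atTop Filter.atTop)
    (ψinv : ℝ → ℝ) (hinv₁ : ∀ y : ℝ, 0 ≤ y → γ ≤ ψinv y ∧ ψ (ψinv y) = y)
    (hinv₂ : ∀ c : ℝ, γ ≤ c → ψinv (ψ c) = c)
    (μ lam : ℝ) (hμ : 0 ≤ μ) (hml : μ ≤ lam) (hlam : 0 < lam) :
    ∀ s ∈ Set.Icc (0 : ℝ) 1,
      kappaML ψ ψinv γ μ lam s ∈ Set.Icc (0 : ℝ) 1 ∧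
      phi0L ψ ψinv γ lam (kappaML ψ ψinv γ μ lam s) - kappaML ψ ψinv γ μ lam s
        = phi0L ψ ψinv γ lam (s * gML ψinv γ μ lam) - s * gML ψinv γ μ lam
          - (phi0L ψ ψinv γ lam (gML ψinv γ μ lam) - gML ψinv γ μ lam) :=
  kappa_identity_general ψ γ hγroot hmono ψinv hinv₁ μ lam hμ hml hlam
end

section
/- Let ψ be a branching mechanism, strictly increasing on [γ,∞) with lim_{c→∞} ψ(c) = ∞, satisfying the extinction condition. Fix μ ≥ 0 and t > 0, and set p = ψ^{-1}(μ). Then: (i) for every w > 0 the integral ∫_w^∞ dx/( ψ(p+x) − μ ) is finite, and there is a unique w_μ(t) ∈ (0,∞) with ∫_{w_μ(t)}^∞ dx/( ψ(p+x) − μ ) = t; (ii) if for each λ > μ one has v_λ ∈ [0,∞) satisfying ∫_{(q_λ − p)(1 − e^{-v_λ})}^{q_λ − p} dx/( ψ(p+x) − μ ) = t, where q_λ = ψ^{-1}(λ), then lim_{λ→∞} (q_λ − p)(1 − e^{-v_λ}) = w_μ(t). -/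
open MeasureTheory

/-!
Put `f x = (ψ (p + x) - μ)⁻¹` and `F w = ∫_w^∞ f`. Near infinity `f ≤ 2/ψ(p + x)`, so the
extinction condition makes `F` finite; `F` is continuous, strictly decreasing and tends to `0`.
A branching mechanism is convex, its Lévy–Khintchine integrand being convex in `c`, so
`ψ(p + x) - μ ≤ C x` for small `x`: `f` is not integrable at `0` and `F(0+) = ∞`. Hence `F` takes
the value `t` exactly once, at `w_μ(t)`. In (ii) the lower limit `a_λ` is positive (otherwise the
integral diverges) and `F(a_λ) = t + F(q_λ - p) → t`, which forces `a_λ → w_μ(t)`.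
-/

open Set Filter Topology

theorem StrictAntiOn.tendsto_of_tendsto_comp {α β ι : Type*} [LinearOrder α] [TopologicalSpace α]
    [OrderTopology α] [LinearOrder β] [TopologicalSpace β] [OrderTopology β] {F : α → β}
    {c w : α} (hF : StrictAntiOn F (Ioi c)) (hw : c < w) {a : ι → α} {l : Filter ι}
    (ha : ∀ᶠ i in l, c < a i) (hFa : Tendsto (fun i => F (a i)) l (𝓝 (F w))) :
    Tendsto a l (𝓝 w) := by
  refine tendsto_order.2 ⟨fun u hu => ?_, fun u hu => ?_⟩
  · rcases le_or_gt u c with huc | huc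
    · exact ha.mono fun i hi => huc.trans_lt hi
    filter_upwards [ha, hFa.eventually (eventually_lt_nhds (hF huc hw hu))] with i hai hi
    by_contra! h
    exact (hF.antitoneOn hai huc h).not_gt hi
  · filter_upwards [ha, hFa.eventually (eventually_gt_nhds (hF hw (hw.trans hu) hu))]
      with i hai hi
    by_contra! h
    exact (hF.antitoneOn (hw.trans hu) hai h).not_gt hi

section TailIntegral

variable {f : ℝ → ℝ} {c : ℝ}

theorem strictAntiOn_integral_Ioi (hpos : ∀ x, c < x → 0 < f x)
    (hint : ∀ w, c < w → IntegrableOn f (Ioi w)) :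
    StrictAntiOn (fun w => ∫ x in Ioi w, f x) (Ioi c) := by
  intro a ha b hb hab
  simp only [← intervalIntegral.integral_interval_add_Ioi (hint a ha) (hint b hb),
    lt_add_iff_pos_left]
  exact intervalIntegral.intervalIntegral_pos_of_pos_on
    ((intervalIntegrable_iff_integrableOn_Ioc_of_le hab.le).2
      ((hint a ha).mono_set Ioc_subset_Ioi_self))
    (fun x hx => hpos x (lt_trans ha hx.1)) hab

theorem continuousOn_integral_Ioi (hint : ∀ w, c < w → IntegrableOn f (Ioi w)) :
    ContinuousOn (fun w => ∫ x in Ioi w, f x) (Ioi c) := by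
  intro w (hw : c < w)
  obtain ⟨u, hcu, huw⟩ := exists_between hw
  have hprim : ContinuousOn (fun v => ∫ x in u..v, f x) (Icc u (w + 1)) := by
    simpa only [uIcc_of_le (huw.trans (lt_add_one w)).le] using
      intervalIntegral.continuousOn_primitive_interval' (b₂ := w + 1)
        ((intervalIntegrable_iff_integrableOn_Ioc_of_le (huw.trans (lt_add_one w)).le).2
          ((hint u hcu).mono_set Ioc_subset_Ioi_self)) left_mem_uIcc
  have hsplit : EqOn (fun v => (∫ x in Ioi u, f x) - ∫ x in u..v, f x)
      (fun v => ∫ x in Ioi v, f x) (Icc u (w + 1)) := fun v hv => by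
    simp only [← intervalIntegral.integral_interval_add_Ioi (hint u hcu)
      (hint v (hcu.trans_le hv.1)), add_sub_cancel_left]
  exact ((continuousOn_const.sub hprim).congr hsplit.symm).continuousAt
    (Icc_mem_nhds huw (lt_add_one w)) |>.continuousWithinAt

theorem exists_lt_integral_Ioi (hpos : ∀ x, c < x → 0 < f x)
    (hint : ∀ w, c < w → IntegrableOn f (Ioi w))
    (hnonint : ∀ d, c < d → ¬IntegrableOn f (Ioc c d)) (t : ℝ) :
    ∃ w, c < w ∧ t < ∫ x in Ioi w, f x := by
  by_contra! hle
  have hc : ∀ n : ℕ, c < c + 1 / (n + 1) := fun n => lt_add_of_pos_right c (by positivity)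
  refine hnonint (c + 1) (lt_add_one c) (integrableOn_Ioc_of_intervalIntegral_norm_bounded_left
    (l := atTop) (I := t - ∫ x in Ioi (c + 1), f x)
    (fun n => (hint _ (hc n)).mono_set Ioc_subset_Ioi_self) ?_ (Eventually.of_forall fun n => ?_))
  · simpa using tendsto_one_div_add_atTop_nhds_zero_nat.const_add c
  · have hn1 : c + 1 / (n + 1) ≤ c + 1 := by
      gcongr
      exact div_le_one_of_le₀ (by simp) (by positivity)
    rw [setIntegral_congr_fun measurableSet_Ioc
      (fun x hx => Real.norm_of_nonneg (hpos x ((hc n).trans hx.1)).le),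
      ← intervalIntegral.integral_of_le hn1, le_sub_iff_add_le,
      intervalIntegral.integral_interval_add_Ioi (hint _ (hc n)) (hint _ (lt_add_one c))]
    exact hle _ (hc n)

theorem existsUnique_integral_Ioi_eq (hpos : ∀ x, c < x → 0 < f x)
    (hint : ∀ w, c < w → IntegrableOn f (Ioi w))
    (hnonint : ∀ d, c < d → ¬IntegrableOn f (Ioc c d)) {t : ℝ} (ht : 0 < t) :
    ∃! w, c < w ∧ ∫ x in Ioi w, f x = t := by
  obtain ⟨w₁, hw₁, ht₁⟩ := exists_lt_integral_Ioi hpos hint hnonint t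
  obtain ⟨w₂, ht₂, hw₂⟩ := (((tendsto_integral_Ioi_zero tendsto_id).eventually
    (eventually_lt_nhds ht)).and (eventually_gt_atTop c)).exists
  obtain ⟨w, hw, hFw⟩ := isPreconnected_Ioi.intermediate_value hw₂ hw₁
    (continuousOn_integral_Ioi hint) ⟨ht₂.le, ht₁.le⟩
  exact ⟨w, ⟨hw, hFw⟩, fun w' hw' =>
    (strictAntiOn_integral_Ioi hpos hint).injOn hw'.1 hw (hw'.2.trans hFw.symm)⟩

theorem tendsto_of_intervalIntegral_eq_integral_Ioi {ι : Type*} {l : Filter ι}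
    [l.IsCountablyGenerated] {a b : ι → ℝ} {t w : ℝ} (hpos : ∀ x, c < x → 0 < f x)
    (hint : ∀ w, c < w → IntegrableOn f (Ioi w))
    (hnonint : ∀ d, c < d → ¬IntegrableOn f (Ioc c d)) (hb : Tendsto b l atTop)
    (ha : ∀ᶠ i in l, c ≤ a i ∧ ∫ x in a i..b i, f x = t) (ht : t ≠ 0) (hw : c < w)
    (hFw : ∫ x in Ioi w, f x = t) : Tendsto a l (𝓝 w) := by
  have hbc : ∀ᶠ i in l, c < b i := hb.eventually_gt_atTop c
  -- at `a i = c` the interval integral would be the junk value `0`, as `f` is not integrable there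
  have hac : ∀ᶠ i in l, c < a i := by
    filter_upwards [ha, hbc] with i ⟨hca, hab⟩ hcb
    refine hca.lt_of_ne fun hca => hnonint (b i) hcb ?_
    rw [← hca] at hab
    exact (intervalIntegrable_iff_integrableOn_Ioc_of_le hcb.le).1
      (intervalIntegral.intervalIntegrable_of_integral_ne_zero (hab ▸ ht))
  have hsplit : ∀ᶠ i in l, t + ∫ x in Ioi (b i), f x = ∫ x in Ioi (a i), f x := by
    filter_upwards [ha, hac, hbc] with i ⟨_, hab⟩ hca hcb
    rw [← hab, intervalIntegral.integral_interval_add_Ioi (hint _ hca) (hint _ hcb)]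
  refine (strictAntiOn_integral_Ioi hpos hint).tendsto_of_tendsto_comp hw hac ?_
  rw [hFw, ← add_zero t]
  exact ((tendsto_integral_Ioi_zero hb).const_add t).congr' hsplit

end TailIntegral

theorem Real.exp_neg_sub_one_add_le_sq {u : ℝ} (hu : 0 ≤ u) : Real.exp (-u) - 1 + u ≤ u ^ 2 := by
  rcases le_or_gt u 1 with hu1 | hu1
  · have := Real.abs_exp_sub_one_sub_id_le (x := -u) (by rwa [abs_neg, abs_of_nonneg hu])
    rw [neg_sq] at this
    linarith [(abs_le.1 this).2]
  · nlinarith [Real.exp_le_one_iff.2 (neg_nonpos.2 hu)]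

noncomputable def branchingKernel (c x : ℝ) : ℝ :=
  Real.exp (-(c * x)) - 1 + (if x < 1 then c * x else 0)

theorem abs_branchingKernel_le {c x : ℝ} (hc : 0 ≤ c) (hx : 0 < x) :
    |branchingKernel c x| ≤ (1 + c ^ 2) * min 1 (x ^ 2) := by
  unfold branchingKernel
  have hcx : 0 ≤ c * x := mul_nonneg hc hx.le
  split_ifs with hx1
  · have hlow : 0 ≤ Real.exp (-(c * x)) - 1 + c * x := by linarith [Real.add_one_le_exp (-(c * x))]
    rw [abs_of_nonneg hlow, min_eq_right (by nlinarith)]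
    nlinarith [Real.exp_neg_sub_one_add_le_sq hcx, sq_nonneg x]
  · have : Real.exp (-(c * x)) ≤ 1 := Real.exp_le_one_iff.2 (neg_nonpos.2 hcx)
    rw [abs_of_nonpos (by linarith), min_eq_left (by nlinarith)]
    nlinarith [Real.exp_pos (-(c * x))]

theorem convexOn_branchingKernel (x : ℝ) : ConvexOn ℝ univ (branchingKernel · x) := by
  unfold branchingKernel
  refine ⟨convex_univ, fun a _ b _ u v hu hv huv => ?_⟩
  have hexp := convexOn_exp.2 (mem_univ (-(a * x))) (mem_univ (-(b * x))) hu hv huv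
  simp only [smul_eq_mul] at hexp ⊢
  rw [show -((u * a + v * b) * x) = u * -(a * x) + v * -(b * x) by ring]
  split_ifs <;> nlinarith

theorem convexOn_integral {E X : Type*} [AddCommGroup E] [Module ℝ E] [MeasurableSpace X]
    {ν : Measure X} {s : Set E} {g : E → X → ℝ} (hs : Convex ℝ s)
    (hg : ∀ x, ConvexOn ℝ s (g · x)) (hint : ∀ c ∈ s, Integrable (g c) ν) :
    ConvexOn ℝ s fun c => ∫ x, g c x ∂ν := by
  refine ⟨hs, fun a ha b hb u v hu hv huv => ?_⟩
  calc ∫ x, g (u • a + v • b) x ∂ν ≤ ∫ x, (u • g a x + v • g b x) ∂ν :=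
        integral_mono (hint _ (hs ha hb hu hv huv)) (((hint a ha).smul u).add ((hint b hb).smul v))
          fun x => (hg x).2 ha hb hu hv huv
    _ = u • ∫ x, g a x ∂ν + v • ∫ x, g b x ∂ν := by
        rw [integral_add (by exact (hint a ha).smul u) (by exact (hint b hb).smul v),
          integral_smul, integral_smul]

theorem IsBMWith.integrable_branchingKernel {ψ : ℝ → ℝ} {α β : ℝ} {ν : Measure ℝ}
    (h : IsBMWith ψ α β ν) {c : ℝ} (hc : 0 ≤ c) : Integrable (branchingKernel c) ν := by
  obtain ⟨-, hν0, hνint, -⟩ := h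
  have hmin : Integrable (fun x : ℝ => min 1 (x ^ 2)) ν :=
    ⟨by fun_prop, (hasFiniteIntegral_iff_ofReal (ae_of_all _ fun x => by positivity)).2 hνint⟩
  refine (hmin.const_mul (1 + c ^ 2)).mono' (Measurable.aestronglyMeasurable
    ((by fun_prop : Measurable fun x => Real.exp (-(c * x)) - 1).add
      (Measurable.ite measurableSet_Iio (by fun_prop) measurable_const))) ?_
  filter_upwards [measure_eq_zero_iff_ae_notMem.1 hν0] with x hx
  exact abs_branchingKernel_le hc (not_le.1 hx)

theorem IsBranchingMechanism.convexOn {ψ : ℝ → ℝ} (hψ : IsBranchingMechanism ψ) :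
    ConvexOn ℝ (Ici 0) ψ := by
  obtain ⟨α, β, ν, h⟩ := hψ
  have hquad : ConvexOn ℝ (Ici 0) fun c : ℝ => α * c + β * c ^ 2 :=
    ((LinearMap.mul ℝ ℝ α).convexOn (convex_Ici 0)).add
      (((convexOn_pow 2).subset (Ici_subset_Ici.2 le_rfl) (convex_Ici 0)).smul h.1)
  exact (hquad.add (convexOn_integral (convex_Ici 0)
    (fun x => (convexOn_branchingKernel x).subset (subset_univ _) (convex_Ici 0))
    fun c hc => h.integrable_branchingKernel hc)).congr fun c hc => (h.2.2.2 c hc).symm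

theorem antitoneOn_inv_sub {φ : ℝ → ℝ} {s : Set ℝ} {μ : ℝ} (hφ : MonotoneOn φ s)
    (hμ : ∀ x ∈ s, μ < φ x) : AntitoneOn (fun x => (φ x - μ)⁻¹) s :=
  fun x hx _ hy hxy => inv_anti₀ (sub_pos.2 (hμ x hx)) (sub_le_sub_right (hφ hx hy hxy) μ)

theorem integrableOn_Ioi_inv_sub {φ : ℝ → ℝ} {a μ c₀ : ℝ} (hφ : MonotoneOn φ (Ici a))
    (hμ : μ < φ a) (htop : Tendsto φ atTop atTop)
    (hint : IntegrableOn (fun x => (φ x)⁻¹) (Ioi c₀)) :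
    IntegrableOn (fun x => (φ x - μ)⁻¹) (Ioi a) := by
  have hanti := antitoneOn_inv_sub hφ fun x hx => hμ.trans_le (hφ self_mem_Ici hx hx)
  obtain ⟨N, hN⟩ := eventually_atTop.1 (htop.eventually_ge_atTop (2 * |μ| + 1))
  set M := max a (max c₀ N)
  have hIcc : IntegrableOn (fun x => (φ x - μ)⁻¹) (Icc a M) :=
    (hanti.mono Icc_subset_Ici_self).integrableOn_isCompact isCompact_Icc
  have hIoi : IntegrableOn (fun x => (φ x - μ)⁻¹) (Ioi M) := by
    have hc₀M : c₀ ≤ M := le_max_of_le_right (le_max_left _ _)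
    refine ((hint.mono_set (Ioi_subset_Ioi hc₀M)).const_mul 2).mono'
      (aemeasurable_restrict_of_antitoneOn measurableSet_Ioi
        (hanti.mono (Ioi_subset_Ici (le_max_left _ _)))).aestronglyMeasurable ?_
    filter_upwards [ae_restrict_mem measurableSet_Ioi] with x (hx : M < x)
    have hφx : 2 * |μ| + 1 ≤ φ x :=
      hN x ((le_max_of_le_right (le_max_right _ _)).trans hx.le)
    have hμx : φ x / 2 ≤ φ x - μ := by linarith [le_abs_self μ]
    rw [Real.norm_of_nonneg (inv_nonneg.2 (by linarith [abs_nonneg μ]))]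
    calc (φ x - μ)⁻¹ ≤ (φ x / 2)⁻¹ := inv_anti₀ (by linarith [abs_nonneg μ]) hμx
      _ = 2 * (φ x)⁻¹ := by rw [inv_div, div_eq_mul_inv]
  rw [← Ioc_union_Ioi_eq_Ioi (le_max_left a _)]
  exact (hIcc.mono_set Ioc_subset_Icc_self).union hIoi

theorem ConvexOn.not_integrableOn_Ioc_inv_sub {ψ : ℝ → ℝ} {p d : ℝ} (hψ : ConvexOn ℝ (Ici p) ψ)
    (hlt : ∀ x, 0 < x → ψ p < ψ (p + x)) (hd : 0 < d) :
    ¬IntegrableOn (fun x => (ψ (p + x) - ψ p)⁻¹) (Ioc 0 d) := by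
  set C := ψ (p + 1) - ψ p
  have hC : 0 < C := sub_pos.2 (hlt 1 one_pos)
  have hsecant : ∀ x ∈ Ioc (0 : ℝ) 1, ψ (p + x) - ψ p ≤ x * C := by
    intro x ⟨hx0, hx1⟩
    have := hψ.secant_mono (x := p + x) (y := p + 1) self_mem_Ici (by simp [hx0.le]) (by simp)
      (by simp [hx0.ne']) (by simp) (by linarith)
    rwa [add_sub_cancel_left, add_sub_cancel_left, div_one, div_le_iff₀ hx0, mul_comm] at this
  intro hint
  have hinv : IntegrableOn (fun x : ℝ => x⁻¹) (Ioc 0 (min d 1)) := by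
    refine ((hint.mono_set (Ioc_subset_Ioc_right (min_le_left _ _))).const_mul C).mono'
      (by fun_prop) ?_
    filter_upwards [ae_restrict_mem measurableSet_Ioc] with x ⟨hx0, hx⟩
    have hpos : 0 < ψ (p + x) - ψ p := sub_pos.2 (hlt x hx0)
    rw [Real.norm_of_nonneg (inv_nonneg.2 hx0.le), ← div_eq_mul_inv, le_div_iff₀ hpos,
      inv_mul_le_iff₀ hx0]
    exact hsecant x ⟨hx0, hx.trans (min_le_right _ _)⟩
  have hd1 : 0 < min d 1 := lt_min hd one_pos
  rcases intervalIntegrable_inv_iff.1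
    ((intervalIntegrable_iff_integrableOn_Ioc_of_le hd1.le).2 hinv) with h | h
  · exact hd1.ne h
  · exact h left_mem_uIcc

theorem MonotoneOn.tendsto_atTop_of_rightInverse {ψ g : ℝ → ℝ} {γ : ℝ}
    (hψ : MonotoneOn ψ (Ici γ)) (hg : ∀ᶠ y in atTop, γ ≤ g y ∧ ψ (g y) = y) :
    Tendsto g atTop atTop := by
  refine tendsto_atTop.2 fun K => ?_
  filter_upwards [hg, eventually_gt_atTop (ψ (max K γ))] with y ⟨hγy, hy⟩ hKy
  by_contra! hlt
  have := hψ hγy (le_max_right K γ) (hlt.le.trans (le_max_left K γ))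
  linarith

theorem extinction_integral_limit_general (ψ : ℝ → ℝ) (hψ : IsBranchingMechanism ψ) (γ : ℝ)
    (hγ0 : 0 ≤ γ)
    (hmono : StrictMonoOn ψ (Set.Ici γ))
    (htop : Filter.Tendsto ψ Filter.atTop Filter.atTop)
    (hext : ∃ c₀ : ℝ, γ < c₀ ∧ MeasureTheory.IntegrableOn (fun c => (ψ c)⁻¹) (Set.Ioi c₀))
    (ψinv : ℝ → ℝ) (hinv₁ : ∀ y : ℝ, 0 ≤ y → γ ≤ ψinv y ∧ ψ (ψinv y) = y)
    (μ t : ℝ) (hμ : 0 ≤ μ) (ht : 0 < t) :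
    (∀ w : ℝ, 0 < w →
      MeasureTheory.IntegrableOn (fun x => (ψ (ψinv μ + x) - μ)⁻¹) (Set.Ioi w)) ∧
    ∃ w : ℝ,
      (0 < w ∧ (∫ x in Set.Ioi w, (ψ (ψinv μ + x) - μ)⁻¹) = t) ∧
      (∀ w' : ℝ, 0 < w' → (∫ x in Set.Ioi w', (ψ (ψinv μ + x) - μ)⁻¹) = t → w' = w) ∧
      (∀ v : ℝ → ℝ,
        (∀ lam : ℝ, μ < lam → 0 ≤ v lam ∧
          (∫ x in ((ψinv lam - ψinv μ) * (1 - Real.exp (-(v lam))))..(ψinv lam - ψinv μ),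
            (ψ (ψinv μ + x) - μ)⁻¹) = t) →
        Filter.Tendsto (fun lam => (ψinv lam - ψinv μ) * (1 - Real.exp (-(v lam))))
          Filter.atTop (nhds w)) := by
  obtain ⟨c₀, -, hc₀⟩ := hext
  obtain ⟨hpγ, hψp⟩ := hinv₁ μ hμ
  set p := ψinv μ
  have hlt : ∀ x, 0 < x → μ < ψ (p + x) := fun x hx =>
    hψp ▸ hmono hpγ (by simp only [mem_Ici]; linarith) (lt_add_of_pos_right p hx)
  have hpos : ∀ x, 0 < x → 0 < (ψ (p + x) - μ)⁻¹ := fun x hx => inv_pos.2 (sub_pos.2 (hlt x hx))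
  have hint : ∀ w, 0 < w → IntegrableOn (fun x => (ψ (p + x) - μ)⁻¹) (Ioi w) := by
    intro w hw
    have := integrableOn_Ioi_inv_sub (hmono.monotoneOn.mono (Ici_subset_Ici.2 (by linarith)))
      (hlt w hw) htop hc₀
    rwa [← (measurePreserving_add_left volume p).integrableOn_comp_preimage
      (measurableEmbedding_addLeft p), preimage_const_add_Ioi, add_sub_cancel_left] at this
  have hnonint : ∀ d, 0 < d → ¬IntegrableOn (fun x => (ψ (p + x) - μ)⁻¹) (Ioc 0 d) := by
    rw [← hψp]
    exact fun d hd => (hψ.convexOn.subset (Ici_subset_Ici.2 (hγ0.trans hpγ)) (convex_Ici p)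
      ).not_integrableOn_Ioc_inv_sub (fun x hx => hψp ▸ hlt x hx) hd
  obtain ⟨w, ⟨hw, hFw⟩, huniq⟩ := existsUnique_integral_Ioi_eq hpos hint hnonint ht
  refine ⟨hint, w, ⟨hw, hFw⟩, fun w' hw' hFw' => huniq w' ⟨hw', hFw'⟩, fun v hv => ?_⟩
  have hq : Tendsto (fun lam => ψinv lam - p) atTop atTop :=
    tendsto_atTop_add_const_right _ (-p) (hmono.monotoneOn.tendsto_atTop_of_rightInverse
      ((eventually_ge_atTop 0).mono hinv₁))
  refine tendsto_of_intervalIntegral_eq_integral_Ioi hpos hint hnonint hq ?_ ht.ne' hw hFw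
  filter_upwards [eventually_gt_atTop μ, hq.eventually_ge_atTop 0] with lam hlam hq0
  obtain ⟨hv0, hvt⟩ := hv lam hlam
  exact ⟨mul_nonneg hq0 (sub_nonneg.2 (Real.exp_le_one_iff.2 (neg_nonpos.2 hv0))), hvt⟩

/-- For a branching mechanism `ψ` strictly increasing on `[γ,∞)` (`γ` its largest root) with
`ψ(c) → ∞`, satisfying the extinction condition `∫^∞ dc/ψ(c) < ∞`, and for `μ ≥ 0`, `t > 0`
(writing `p = ψ^{-1}(μ)`): (i) for every `w > 0` the integral `∫_w^∞ dx/(ψ(p+x)-μ)` is finite,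
and there is a unique `w = w_μ(t) > 0` with `∫_w^∞ dx/(ψ(p+x)-μ) = t`; (ii) if
`v_λ ≥ 0` satisfies `∫_{(q_λ-p)(1-e^{-v_λ})}^{q_λ-p} dx/(ψ(p+x)-μ) = t` for every `λ > μ`,
where `q_λ = ψ^{-1}(λ)`, then `(q_λ-p)(1-e^{-v_λ}) → w_μ(t)` as `λ → ∞`. -/
theorem extinction_integral_limit (ψ : ℝ → ℝ) (hψ : IsBranchingMechanism ψ) (γ : ℝ)
    (hγ0 : 0 ≤ γ) (hγroot : ψ γ = 0) (hγlargest : ∀ c : ℝ, 0 ≤ c → ψ c ≤ 0 → c ≤ γ)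
    (hmono : StrictMonoOn ψ (Set.Ici γ))
    (htop : Filter.Tendsto ψ Filter.atTop Filter.atTop)
    (hext : ∃ c₀ : ℝ, γ < c₀ ∧ MeasureTheory.IntegrableOn (fun c => (ψ c)⁻¹) (Set.Ioi c₀))
    (ψinv : ℝ → ℝ) (hinv₁ : ∀ y : ℝ, 0 ≤ y → γ ≤ ψinv y ∧ ψ (ψinv y) = y)
    (hinv₂ : ∀ c : ℝ, γ ≤ c → ψinv (ψ c) = c)
    (μ t : ℝ) (hμ : 0 ≤ μ) (ht : 0 < t) :
    (∀ w : ℝ, 0 < w →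
      MeasureTheory.IntegrableOn (fun x => (ψ (ψinv μ + x) - μ)⁻¹) (Set.Ioi w)) ∧
    ∃ w : ℝ,
      (0 < w ∧ (∫ x in Set.Ioi w, (ψ (ψinv μ + x) - μ)⁻¹) = t) ∧
      (∀ w' : ℝ, 0 < w' → (∫ x in Set.Ioi w', (ψ (ψinv μ + x) - μ)⁻¹) = t → w' = w) ∧
      (∀ v : ℝ → ℝ,
        (∀ lam : ℝ, μ < lam → 0 ≤ v lam ∧
          (∫ x in ((ψinv lam - ψinv μ) * (1 - Real.exp (-(v lam))))..(ψinv lam - ψinv μ),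
            (ψ (ψinv μ + x) - μ)⁻¹) = t) →
        Filter.Tendsto (fun lam => (ψinv lam - ψinv μ) * (1 - Real.exp (-(v lam))))
          Filter.atTop (nhds w)) :=
  extinction_integral_limit_general ψ hψ γ hγ0 hmono htop hext ψinv hinv₁ μ t hμ ht
end
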